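/- arXiv:1506.01221 — 12 statements merged into one kernel-verified Lean document; each statement's English description precedes it below -/
import Mathlib

section
/- If a category C has the Ramsey property for morphisms and all morphisms of C are monic, then every object of C is rigid (i.e., its only automorphism is the identity). Specifically, if some object A has an automorphism α ≠ id_A, then for every object C there exists a 2-coloring of hom(A, C) such that no morphism w : A → C makes w · hom(A, A) monochromatic. -/
/-!
An automorphism `α ≠ 𝟙` of `A` acts on `A ⟶ C` by precomposition, and when every morphism is
monic no morphism is fixed, so no orbit is a singleton. Colouring each orbit representative `0`
and everything else `1` leaves every orbit `(Aut A) · w ⊆ hom(A, A) · w` bichromatic, which is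
incompatible with the Ramsey property for `A → A`.
-/

open CategoryTheory

/-- The hom-version Ramsey arrow. -/
def homArrow {C : Type*} [Category C] (A B C0 : C) (k : Nat) : Prop :=
  Nonempty (A ⟶ B) ∧ Nonempty (B ⟶ C0) ∧
    ∀ χ : (A ⟶ C0) → Fin k, ∃ (i : Fin k) (w : B ⟶ C0),
      ∀ f : A ⟶ B, χ (f ≫ w) = i

/-- Ramsey property for morphisms. -/
def RamseyMor (C : Type*) [Category C] : Prop :=
  ∀ k : Nat, 2 ≤ k → ∀ A B : C, Nonempty (A ⟶ B) →
    ∃ C0 : C, homArrow A B C0 k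

/-- `f ∼_A f'` iff `f' = f ∘ α` for some automorphism `α` of `A`. -/
def subRel {C : Type*} [Category C] {A B : C} (f f' : A ⟶ B) : Prop :=
  ∃ α : A ≅ A, f' = α.hom ≫ f

/-- The object-version (subobject) Ramsey arrow. -/
def objArrow {C : Type*} [Category C] (A B C0 : C) (k : Nat) : Prop :=
  Nonempty (A ⟶ B) ∧ Nonempty (B ⟶ C0) ∧
    ∀ χ : Quot (subRel (A := A) (B := C0)) → Fin k,
      ∃ (i : Fin k) (w : B ⟶ C0),
        ∀ f : A ⟶ B, χ (Quot.mk _ (f ≫ w)) = i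

/-- Ramsey property for objects. -/
def RamseyObj (C : Type*) [Category C] : Prop :=
  ∀ k : Nat, 2 ≤ k → ∀ A B : C, Nonempty (A ⟶ B) →
    ∃ C0 : C, objArrow A B C0 k

section OrbitColoring

variable {G X : Type*} [Group G] [MulAction G X]

theorem MulAction.exists_fin_two_coloring_nonconstant_on_orbits
    (hfix : ∀ x : X, ∃ g : G, g • x ≠ x) :
    ∃ χ : X → Fin 2, ∀ x : X, ∃ g g' : G, χ (g • x) ≠ χ (g' • x) := by
  classical
  let rep : X → X := fun x => (⟦x⟧ : MulAction.orbitRel.Quotient G X).out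
  have rep_eq_of_mem_orbit {x y : X} (h : y ∈ MulAction.orbit G x) : rep y = rep x := by
    simp only [rep, Quotient.sound (MulAction.orbitRel_apply.mpr h)]
  have rep_mem_orbit (x : X) : rep x ∈ MulAction.orbit G x :=
    MulAction.orbitRel_apply.mp (Quotient.mk_out x)
  refine ⟨fun x => if x = rep x then 0 else 1, fun x => ?_⟩
  obtain ⟨g, hg⟩ := rep_mem_orbit x
  obtain ⟨g', hg'⟩ := hfix (rep x)
  have hrep : rep (rep x) = rep x := rep_eq_of_mem_orbit (rep_mem_orbit x)
  have hmoved : rep (g' • rep x) = rep x :=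
    (rep_eq_of_mem_orbit (MulAction.mem_orbit _ g')).trans hrep
  refine ⟨g, g' * g, ?_⟩
  simp only [mul_smul, hg, hrep, hmoved, if_neg hg', if_true]
  decide

end OrbitColoring

namespace CategoryTheory

variable {C : Type*} [Category C]

instance Aut.mulActionOpHom (A B : C) : MulAction (Aut A)ᵐᵒᵖ (A ⟶ B) where
  smul β f := β.unop.hom ≫ f
  one_smul := Category.id_comp
  mul_smul _ _ _ := Category.assoc _ _ _

theorem Aut.op_smul_ne_self {A B : C} (α : Aut A) (hα : α.hom ≠ 𝟙 A) (f : A ⟶ B) [Mono f] :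
    MulOpposite.op α • f ≠ f := fun h =>
  hα <| (cancel_mono f).mp <| by rwa [Category.id_comp]

theorem exists_fin_two_coloring_not_monochromatic_of_hom_ne_id
    {A B : C} (hmono : ∀ f : A ⟶ B, Mono f) (α : A ≅ A) (hα : α.hom ≠ 𝟙 A) :
    ∃ χ : (A ⟶ B) → Fin 2, ∀ w : A ⟶ B, ∃ f g : A ⟶ A, χ (f ≫ w) ≠ χ (g ≫ w) := by
  obtain ⟨χ, hχ⟩ := MulAction.exists_fin_two_coloring_nonconstant_on_orbits
    (G := (Aut A)ᵐᵒᵖ) fun f : A ⟶ B =>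
      haveI := hmono f
      ⟨MulOpposite.op α, Aut.op_smul_ne_self α hα f⟩
  refine ⟨χ, fun w => ?_⟩
  obtain ⟨β, γ, hβγ⟩ := hχ w
  exact ⟨β.unop.hom, γ.unop.hom, hβγ⟩

end CategoryTheory

theorem stmt0 {C : Type*} [Category C]
    (hmono : ∀ {X Y : C} (f : X ⟶ Y), Mono f)
    (hR : RamseyMor C) :
    (∀ (A : C) (α : A ≅ A), α = Iso.refl A) ∧
    (∀ (A : C) (α : A ≅ A), α.hom ≠ 𝟙 A →
      ∀ C0 : C, ∃ χ : (A ⟶ C0) → Fin 2,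
        ∀ w : A ⟶ C0, ∃ f g : A ⟶ A, χ (f ≫ w) ≠ χ (g ≫ w)) := by
  refine ⟨fun A α => ?_, fun A α hα C0 =>
    exists_fin_two_coloring_not_monochromatic_of_hom_ne_id (fun f => hmono f) α hα⟩
  by_contra hne
  have hα : α.hom ≠ 𝟙 A := fun h => hne (Iso.ext h)
  obtain ⟨C0, -, -, hC0⟩ := hR 2 le_rfl A A ⟨𝟙 A⟩
  obtain ⟨χ, hχ⟩ := exists_fin_two_coloring_not_monochromatic_of_hom_ne_id
    (B := C0) (fun f => hmono f) α hα
  obtain ⟨i, w, hw⟩ := hC0 χ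
  obtain ⟨f, g, hfg⟩ := hχ w
  exact hfg ((hw f).trans (hw g).symm)
end

section
/- Let C be a category whose morphisms are all monic. Then C has the Ramsey property for morphisms if and only if all objects of C are rigid and C has the Ramsey property for objects. -/
/-!
Rigidity of `A` makes `∼_A` trivial, so the two Ramsey arrows coincide. Conversely, since
morphisms are monic, a nontrivial automorphism `α` of `A` acts freely on `A ⟶ C` by
precomposition; indexing each orbit by `ZMod (orderOf α)` yields a 3-colouring in which `w` and
`α ≫ w` always differ, whereas the arrow `A ⟶ A ⟶ C` forces them to share a colour.
-/

open CategoryTheory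

theorem ZMod.exists_fin_three_coloring_add_one_ne {m : ℕ} (hm : m ≠ 1) :
    ∃ c : ZMod m → Fin 3, ∀ x, c (x + 1) ≠ c x := by
  match m, hm with
  | 0, _ =>
    let c : ℤ → Fin 3 := fun x => if Even x then 0 else 1
    have hc : ∀ x : ℤ, c (x + 1) ≠ c x := fun x => by
      by_cases hx : Even x <;> simp [c, hx]
    exact ⟨c, hc⟩
  | n + 2, _ =>
    let c : Fin (n + 2) → Fin 3 := fun x => if x.val = n + 1 then 2 else ⟨x.val % 2, by omega⟩
    have hc : ∀ x : Fin (n + 2), c (x + 1) ≠ c x := by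
      intro x
      have hx := Fin.val_add_one x
      generalize x + 1 = y at hx
      simp only [c, ne_eq]
      split_ifs at hx ⊢ <;> simp only [Fin.ext_iff, Fin.val_last] at * <;> omega
    exact ⟨c, hc⟩

section FreeAction

variable {G S : Type*} [Group G] [MulAction G S]

theorem exists_zmod_orderOf_index {a : G} (hfree : ∀ (g : G) (x : S), g • x = x → g = 1) :
    ∃ ν : S → ZMod (orderOf a), ∀ x, ν (a • x) = ν x + 1 := by
  classical
  let r : S → S := fun x => (Quotient.mk (MulAction.orbitRel (Subgroup.zpowers a) S) x).out
  have hr : ∀ x, ∃ n : ℤ, a ^ n • r x = x := by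
    intro x
    obtain ⟨⟨g, hg⟩, hgx⟩ := Quotient.mk_out (s := MulAction.orbitRel (Subgroup.zpowers a) S) x
    obtain ⟨n, rfl⟩ := Subgroup.mem_zpowers_iff.mp hg
    exact ⟨-n, by rw [zpow_neg, inv_smul_eq_iff]; exact hgx.symm⟩
  choose n hn using hr
  have hr_smul : ∀ x, r (a • x) = r x := fun x =>
    congrArg Quotient.out (Quotient.sound ⟨⟨a, Subgroup.mem_zpowers a⟩, rfl⟩)
  refine ⟨fun x => (n x : ZMod (orderOf a)), fun x => ?_⟩
  have hpow : a ^ n (a • x) = a ^ (n x + 1) := by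
    have h : a ^ n (a • x) • r x = a ^ (n x + 1) • r x :=
      calc a ^ n (a • x) • r x = a • x := by rw [← hr_smul, hn]
        _ = a ^ (n x + 1) • r x := by rw [add_comm, zpow_one_add, mul_smul, hn]
    have := hfree _ _ (show ((a ^ (n x + 1))⁻¹ * a ^ n (a • x)) • r x = r x by
      rw [mul_smul, h, inv_smul_smul])
    exact (inv_mul_eq_one.mp this).symm
  simpa using (ZMod.intCast_eq_intCast_iff _ _ _).mpr (zpow_eq_zpow_iff_modEq.mp hpow)

theorem exists_fin_three_coloring_smul_ne {a : G} (ha : a ≠ 1)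
    (hfree : ∀ (g : G) (x : S), g • x = x → g = 1) :
    ∃ χ : S → Fin 3, ∀ x, χ (a • x) ≠ χ x := by
  obtain ⟨ν, hν⟩ := exists_zmod_orderOf_index (a := a) hfree
  obtain ⟨c, hc⟩ := ZMod.exists_fin_three_coloring_add_one_ne (mt orderOf_eq_one_iff.mp ha)
  exact ⟨c ∘ ν, fun x => by simpa only [Function.comp_apply, hν] using hc (ν x)⟩

end FreeAction

section Ramsey

variable {C : Type*} [Category C]

instance Aut.precompMulAction {X Y : C} : MulAction (Aut X)ᵐᵒᵖ (X ⟶ Y) :=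
  MulAction.compHom _ (MonoidHom.op (Aut.toEnd X))

theorem Aut.eq_one_of_smul_eq {X Y : C} (g : (Aut X)ᵐᵒᵖ) (f : X ⟶ Y) [Mono f]
    (h : g • f = f) : g = 1 := by
  obtain ⟨α, rfl⟩ := MulOpposite.op_surjective g
  have : α.hom = 𝟙 X := (cancel_mono f).mp (h.trans (Category.id_comp f).symm)
  exact congrArg MulOpposite.op (Aut.ext this)

theorem eq_refl_of_ramseyMor (h : RamseyMor C) {A : C} (hA : ∀ {Y : C} (f : A ⟶ Y), Mono f)
    (α : A ≅ A) : α = Iso.refl A := by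
  by_contra hα
  obtain ⟨C0, -, -, hR⟩ := h 3 (by norm_num) A A ⟨𝟙 A⟩
  obtain ⟨χ, hχ⟩ := exists_fin_three_coloring_smul_ne (G := (Aut A)ᵐᵒᵖ) (S := A ⟶ C0)
    (a := .op α) ((MulOpposite.op_eq_one_iff _).not.mpr hα)
    (fun g f hg => have := hA f; Aut.eq_one_of_smul_eq g f hg)
  obtain ⟨i, w, hw⟩ := hR χ
  exact hχ w ((hw α.hom).trans (Category.id_comp w ▸ hw (𝟙 A)).symm)

theorem objArrow_of_homArrow {A B C0 : C} {k : ℕ} (h : homArrow A B C0 k) :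
    objArrow A B C0 k := by
  obtain ⟨hAB, hBC, hR⟩ := h
  exact ⟨hAB, hBC, fun χ => hR (χ ∘ Quot.mk _)⟩

theorem homArrow_of_objArrow {A B C0 : C} {k : ℕ} (hA : ∀ α : A ≅ A, α = Iso.refl A)
    (h : objArrow A B C0 k) : homArrow A B C0 k := by
  obtain ⟨hAB, hBC, hR⟩ := h
  refine ⟨hAB, hBC, fun χ => hR (Quot.lift χ ?_)⟩
  rintro f _ ⟨α, rfl⟩
  rw [hA α, Iso.refl_hom, Category.id_comp]

end Ramsey

theorem stmt1 {C : Type*} [Category C]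
    (hmono : ∀ {X Y : C} (f : X ⟶ Y), Mono f) :
    RamseyMor C ↔ ((∀ (A : C) (α : A ≅ A), α = Iso.refl A) ∧ RamseyObj C) := by
  constructor
  · intro h
    exact ⟨fun A => eq_refl_of_ramseyMor h hmono,
      fun k hk A B hAB => (h k hk A B hAB).imp fun _ => objArrow_of_homArrow⟩
  · rintro ⟨hrigid, h⟩ k hk A B hAB
    exact (h k hk A B hAB).imp fun _ => homArrow_of_objArrow (hrigid A)
end

section
/- Let C be a category whose morphisms are monic, and let D be a full subcategory of C whose objects are cofinal in C (for every object X of C there is an object D of D with hom_C(X, D) ≠ ∅). If C has the Ramsey property for morphisms, then D has the Ramsey property for morphisms. -/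
/-!
A Ramsey witness `C₀` for `A, B` stays a witness after composing with any `g : C₀ ⟶ C₁`: pull a
colouring of `hom(A, C₁)` back along `g`. Cofinality therefore lets us push the witness found in `C`
into an object of `D`, and since `D` is full, colourings and monochromatic copies are the same read in `D` or in `C`.
-/

open CategoryTheory

lemma homArrow.of_hom {C : Type*} [Category C] {A B C₀ C₁ : C} {k : ℕ}
    (h : homArrow A B C₀ k) (g : C₀ ⟶ C₁) : homArrow A B C₁ k := by
  obtain ⟨hAB, ⟨v⟩, hcol⟩ := h
  refine ⟨hAB, ⟨v ≫ g⟩, fun χ => ?_⟩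
  obtain ⟨i, w, hw⟩ := hcol (fun f => χ (f ≫ g))
  exact ⟨i, w ≫ g, fun f => by simpa using hw f⟩

lemma homArrow.of_fullyFaithful {C D : Type*} [Category C] [Category D] {F : D ⥤ C}
    (hF : F.FullyFaithful) {A B C₀ : D} {k : ℕ}
    (h : homArrow (F.obj A) (F.obj B) (F.obj C₀) k) : homArrow A B C₀ k := by
  obtain ⟨⟨u⟩, ⟨v⟩, hcol⟩ := h
  refine ⟨⟨hF.preimage u⟩, ⟨hF.preimage v⟩, fun χ => ?_⟩
  obtain ⟨i, w, hw⟩ := hcol (fun f => χ (hF.preimage f))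
  exact ⟨i, hF.preimage w, fun f => by simpa using hw (F.map f)⟩

theorem RamseyMor.of_fullyFaithful_of_cofinal {C D : Type*} [Category C] [Category D]
    {F : D ⥤ C} (hF : F.FullyFaithful) (hcof : ∀ X : C, ∃ Y : D, Nonempty (X ⟶ F.obj Y))
    (hR : RamseyMor C) : RamseyMor D := by
  intro k hk A B ⟨f⟩
  obtain ⟨C₀, hC₀⟩ := hR k hk (F.obj A) (F.obj B) ⟨F.map f⟩
  obtain ⟨Y, ⟨g⟩⟩ := hcof C₀
  exact ⟨Y, (hC₀.of_hom g).of_fullyFaithful hF⟩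

theorem stmt4_general {C : Type*} [Category C]
    (P : C → Prop)
    (hcof : ∀ X : C, ∃ D0 : C, P D0 ∧ Nonempty (X ⟶ D0))
    (hR : RamseyMor C) :
    RamseyMor (ObjectProperty.FullSubcategory P) :=
  hR.of_fullyFaithful_of_cofinal (ObjectProperty.fullyFaithfulι P) fun X =>
    let ⟨D0, hD0, hX⟩ := hcof X
    ⟨⟨D0, hD0⟩, hX⟩

theorem stmt4 {C : Type*} [Category C]
    (hmono : ∀ {X Y : C} (f : X ⟶ Y), Mono f)
    (P : C → Prop)
    (hcof : ∀ X : C, ∃ D0 : C, P D0 ∧ Nonempty (X ⟶ D0))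
    (hR : RamseyMor C) :
    RamseyMor (ObjectProperty.FullSubcategory P) :=
  stmt4_general P hcof hR
end

section
/- Let F : C → D and G : D → C be an adjunction (F left adjoint to G). If D has the Ramsey property for morphisms, then C has the Ramsey property for morphisms. Moreover, if A, B ∈ C with hom(A,B) ≠ ∅ and C₀ ∈ D satisfies C₀ →_hom (F(B))^{F(A)}_k, then G(C₀) →_hom (B)^A_k in C. -/
open CategoryTheory

theorem stmt5 {C D : Type*} [Category C] [Category D]
    (F : C ⥤ D) (G : D ⥤ C) (adj : F ⊣ G) :
    (RamseyMor D → RamseyMor C) ∧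
    (∀ (A B : C), Nonempty (A ⟶ B) → ∀ (C0 : D) (k : Nat), 2 ≤ k →
      homArrow (F.obj A) (F.obj B) C0 k → homArrow A B (G.obj C0) k) := by
  have key : ∀ (A B : C), Nonempty (A ⟶ B) → ∀ (C0 : D) (k : Nat), 2 ≤ k →
      homArrow (F.obj A) (F.obj B) C0 k → homArrow A B (G.obj C0) k := by
    intro A B hAB C0 k _ ⟨_, ⟨w0⟩, h⟩
    refine ⟨hAB, ⟨adj.homEquiv B C0 w0⟩, ?_⟩
    intro χ
    obtain ⟨i, w, hw⟩ := h (fun g => χ (adj.homEquiv A C0 g))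
    refine ⟨i, adj.homEquiv B C0 w, ?_⟩
    intro f
    have := hw (F.map f)
    rwa [adj.homEquiv_naturality_left] at this
  refine ⟨?_, key⟩
  intro hD k hk A B hAB
  obtain ⟨f⟩ := hAB
  obtain ⟨C0, hC0⟩ := hD k hk (F.obj A) (F.obj B) ⟨F.map f⟩
  exact ⟨G.obj C0, key A B ⟨f⟩ C0 k hk hC0⟩
end

section
/- Let F : C → D and G : D → C be an adjunction. If C has the dual Ramsey property for morphisms (i.e., C^op has the Ramsey property for morphisms), then D has the dual Ramsey property for morphisms. -/
open CategoryTheory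

theorem stmt6 {C D : Type*} [Category C] [Category D]
    (F : C ⥤ D) (G : D ⥤ C) (adj : F ⊣ G)
    (h : RamseyMor Cᵒᵖ) :
    RamseyMor Dᵒᵖ := by
  intro k hk A B hne
  obtain ⟨f0⟩ := hne
  obtain ⟨C0', h1, ⟨w0⟩, hR⟩ :=
    h k hk (Opposite.op (G.obj A.unop)) (Opposite.op (G.obj B.unop)) ⟨(G.map f0.unop).op⟩
  refine ⟨Opposite.op (F.obj C0'.unop), ⟨f0⟩,
    ⟨((adj.homEquiv C0'.unop B.unop).symm w0.unop).op⟩, ?_⟩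
  intro χ
  obtain ⟨i, w, hw⟩ := hR (fun g => χ (((adj.homEquiv C0'.unop A.unop).symm g.unop).op))
  refine ⟨i, ((adj.homEquiv C0'.unop B.unop).symm w.unop).op, ?_⟩
  intro f
  have := hw ((G.map f.unop).op)
  simp only [Quiver.Hom.unop_op, unop_comp] at this ⊢
  rw [← this]
  congr 1
  apply Quiver.Hom.unop_inj
  simp [Adjunction.homEquiv_naturality_right_symm]
end

section
/- Let F : C → D and G : D → C be an adjunction such that Aut(F(A)) = F(Aut(A)) for all objects A of C (every automorphism of F(A) comes from an automorphism of A). If D has the Ramsey property for objects, then C has the Ramsey property for objects. -/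
open CategoryTheory

theorem stmt8 {C D : Type*} [Category C] [Category D]
    (F : C ⥤ D) (G : D ⥤ C) (adj : F ⊣ G)
    (hAut : ∀ (A : C) (α : F.obj A ≅ F.obj A), ∃ β : A ≅ A, α = F.mapIso β)
    (hR : RamseyObj D) :
    RamseyObj C := by
  intro k hk A B hAB
  obtain ⟨C0, ⟨-, ⟨w0⟩, hC0⟩⟩ := hR k hk (F.obj A) (F.obj B) ⟨F.map hAB.some⟩
  refine ⟨G.obj C0, hAB, ⟨adj.homEquiv B C0 w0⟩, ?_⟩
  intro χ
  obtain ⟨i, w, hw⟩ := hC0 (Quot.lift (fun g => χ (Quot.mk _ (adj.homEquiv A C0 g)))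
    (by
      rintro g g' ⟨α, hα⟩
      obtain ⟨β, hβ⟩ := hAut A α
      refine congrArg χ (Quot.sound ⟨β, ?_⟩)
      subst hα hβ
      simp [Adjunction.homEquiv_naturality_left]))
  refine ⟨i, adj.homEquiv B C0 w, fun f => ?_⟩
  have := hw (F.map f)
  simp only [Adjunction.homEquiv_naturality_left] at this
  exact this
end

section
/- If categories C and D are equivalent, then C has the Ramsey property for objects if and only if D has the Ramsey property for objects. -/
open CategoryTheory

lemma ramseyObj_of_equiv {C D : Type*} [Category C] [Category D] (e : C ≌ D)
    (h : RamseyObj C) : RamseyObj D := by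
  intro k hk A B ⟨f0⟩
  obtain ⟨C0, -, ⟨w0⟩, hC0⟩ :=
    h k hk (e.inverse.obj A) (e.inverse.obj B) ⟨e.inverse.map f0⟩
  refine ⟨e.functor.obj C0, ⟨f0⟩, ⟨e.counitInv.app B ≫ e.functor.map w0⟩, ?_⟩
  intro χ
  set φ : (e.inverse.obj A ⟶ C0) → (A ⟶ e.functor.obj C0) :=
    fun g => e.counitInv.app A ≫ e.functor.map g with hφdef
  have hφ : ∀ g g', subRel g g' → subRel (φ g) (φ g') := by
    rintro g g' ⟨α, rfl⟩
    exact ⟨e.counitIso.symm.app A ≪≫ e.functor.mapIso α ≪≫ e.counitIso.app A,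
      by simp [hφdef]⟩
  obtain ⟨i, w, hw⟩ := hC0 (fun q =>
    χ (Quot.lift (fun g => Quot.mk _ (φ g)) (fun g g' hgg => Quot.sound (hφ g g' hgg)) q))
  refine ⟨i, e.counitInv.app B ≫ e.functor.map w, ?_⟩
  intro f
  have h1 := hw (e.inverse.map f)
  have heq : φ (e.inverse.map f ≫ w) = f ≫ (e.counitInv.app B ≫ e.functor.map w) := by
    simp [hφdef]
  simpa [heq] using h1

theorem stmt9 {C D : Type*} [Category C] [Category D] (e : C ≌ D) :
    RamseyObj C ↔ RamseyObj D := by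
  exact ⟨ramseyObj_of_equiv e, ramseyObj_of_equiv e.symm⟩
end

section
/- If categories C and D are equivalent, then C has the Ramsey property for morphisms if and only if D has the Ramsey property for morphisms. In particular, if C and D are dually equivalent (C equivalent to D^op) and C has the Ramsey property for morphisms, then D has the dual Ramsey property for morphisms. -/
open CategoryTheory

theorem ramseyMor_of_equiv {C D : Type*} [Category C] [Category D]
    (e : C ≌ D) (hC : RamseyMor C) : RamseyMor D := by
  intro k hk A B hAB
  obtain ⟨C0', h1, h2, h3⟩ :=
    hC k hk (e.inverse.obj A) (e.inverse.obj B) ⟨e.inverse.map hAB.some⟩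
  refine ⟨e.functor.obj C0', hAB, ⟨e.counitIso.inv.app B ≫ e.functor.map h2.some⟩, ?_⟩
  intro χ
  obtain ⟨i, w', hw'⟩ := h3 (fun g => χ (e.counitIso.inv.app A ≫ e.functor.map g))
  refine ⟨i, e.counitIso.inv.app B ≫ e.functor.map w', ?_⟩
  intro f
  have := hw' (e.inverse.map f)
  rw [← this]
  congr 1
  have h := e.counitIso.inv.naturality f
  simp only [Functor.id_map, Functor.comp_map] at h
  rw [Functor.map_comp, ← Category.assoc, h, Category.assoc]

theorem stmt10 {C D : Type*} [Category C] [Category D] :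
    ((C ≌ D) → (RamseyMor C ↔ RamseyMor D)) ∧
    ((C ≌ Dᵒᵖ) → RamseyMor C → RamseyMor Dᵒᵖ) := by
  constructor
  · intro e
    exact ⟨ramseyMor_of_equiv e, ramseyMor_of_equiv e.symm⟩
  · intro e
    exact ramseyMor_of_equiv e
end

section
/- Let A be a finite set with at least two elements, linearly ordered by <, and let ⊑ denote the induced antilexicographic order on A^n (x ⊏ y iff there is s with x_i = y_i for all i > s and x_s < y_s). Let π be a permutation of {1,…,n} and σ a permutation of {1,…,m}, and let f : A^n → A^m be given by f(x₁,…,x_n) = (x_{i₁},…,x_{i_m}) for some i₁,…,i_m ∈ {1,…,n}. Then f is monotone from (A^n, ⊑_π) to (A^m, ⊑_σ) — where x ⊑_π y iff (x_{π(1)},…,x_{π(n)}) ⊑ (y_{π(1)},…,y_{π(n)}) — if and only if the numbers j_s = π^{-1}(i_{σ(s)}) for s = 1,…,m satisfy: (i) j_m = n, and (ii) for all s < m, if j_s = k < n then {k+1,…,n} ⊆ {j_{s+1},…,j_m}. -/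
/-- Strict antilexicographic order on tuples induced by a linear order on `A`:
`x ⊏ y` iff there is `s` with `x s < y s` and `x t = y t` for all `t > s`. -/
def antilexLT {A : Type*} [LT A] {n : Nat} (x y : Fin n → A) : Prop :=
  ∃ s : Fin n, x s < y s ∧ ∀ t : Fin n, s < t → x t = y t

/-- Reflexive antilexicographic order. -/
def antilexLE {A : Type*} [LT A] {n : Nat} (x y : Fin n → A) : Prop :=
  x = y ∨ antilexLT x y

/-
Write `j s = π⁻¹(i_{σ(s)})`; after relabelling coordinates by `π` and `σ`, the map is `x ↦ x ∘ j`
between plain antilexicographic orders. It is monotone iff every coordinate `q` above some `j s`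
reappears as `j t` for a later `t`. Necessity: compare the tuples that are `b` exactly at `j s`,
resp. at `q`, and `a < b` elsewhere; the first is below the second, and the last coordinate where
their images differ must read `q`. Sufficiency: if `x ⊏ y` is decided at coordinate `s`, the last
`u` with `x (j u) ≠ y (j u)` has `j u ≤ s`, and `j u < s` is impossible because `s` would reappear
after `u`. Conditions (i) and (ii) are exactly this property for `Fin (m + 1) → Fin (n + 1)`.
-/

open Function

section Antilex

variable {A : Type*} {k l : ℕ}

theorem Fin.exists_ne_forall_gt_eq {f g : Fin k → A} (h : f ≠ g) :
    ∃ u, f u ≠ g u ∧ ∀ t, u < t → f t = g t := by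
  classical
  obtain ⟨u, hu, hmax⟩ :=
    (Finset.univ.filter fun t => f t ≠ g t).exists_max_image id (by
      obtain ⟨u, hu⟩ := Function.ne_iff.mp h
      exact ⟨u, by simpa using hu⟩)
  refine ⟨u, by simpa using hu, fun t hut => ?_⟩
  by_contra hne
  exact (hmax t (by simpa using hne)).not_gt hut

variable [Preorder A]

theorem antilexLE_comp_of_forall_exists {j : Fin k → Fin l}
    (hj : ∀ s q, j s < q → ∃ t, s < t ∧ j t = q) {x y : Fin l → A} (hxy : antilexLE x y) :
    antilexLE (x ∘ j) (y ∘ j) := by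
  rcases hxy with rfl | ⟨s, hs, habove⟩
  · exact Or.inl rfl
  by_cases heq : x ∘ j = y ∘ j
  · exact Or.inl heq
  obtain ⟨u, hu, hmax⟩ := Fin.exists_ne_forall_gt_eq heq
  have hus : j u ≤ s := not_lt.mp fun h => hu (habove _ h)
  rcases hus.lt_or_eq with hlt | heq
  · obtain ⟨t, hut, hts⟩ := hj u s hlt
    exact absurd (hmax t hut) (by simpa [hts] using hs.ne)
  · exact Or.inr ⟨u, by simpa [heq] using hs, hmax⟩

variable {a b : A}

theorem antilexLT_update_const (hab : a < b) {p q : Fin l} (hpq : p < q) :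
    antilexLT (update (const _ a) p b) (update (const _ a) q b) :=
  ⟨q, by simpa [update_of_ne hpq.ne'] using hab, fun t hqt => by
    simp [update_of_ne (hpq.trans hqt).ne', update_of_ne hqt.ne']⟩

theorem exists_gt_apply_eq_of_antilexLE_update_const (hab : a < b) {j : Fin k → Fin l}
    {s : Fin k} {q : Fin l} (hq : j s ≠ q)
    (h : antilexLE (update (const _ a) (j s) b ∘ j) (update (const _ a) q b ∘ j)) :
    ∃ t, s < t ∧ j t = q := by
  have hs : (update (const _ a) (j s) b ∘ j) s ≠ (update (const _ a) q b ∘ j) s := by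
    simpa [update_of_ne hq] using hab.ne'
  rcases h with heq | ⟨u, hu, habove⟩
  · exact absurd (congrFun heq s) hs
  have hju : j u = q := by
    by_contra hne
    by_cases hus : j u = j s
    · simp only [comp_apply, hus, update_self, update_of_ne hq, const_apply] at hu
      exact hu.not_gt hab
    · simp [update_of_ne hus, update_of_ne hne] at hu
  refine ⟨u, ?_, hju⟩
  rcases lt_trichotomy s u with hsu | rfl | hus
  · exact hsu
  · exact absurd hju hq
  · exact absurd (habove s hus) hs

theorem antilexLE_comp_monotone_iff (hab : a < b) (j : Fin k → Fin l) :
    (∀ x y : Fin l → A, antilexLE x y → antilexLE (x ∘ j) (y ∘ j)) ↔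
      ∀ s q, j s < q → ∃ t, s < t ∧ j t = q :=
  ⟨fun hmono _ _ hsq => exists_gt_apply_eq_of_antilexLE_update_const hab hsq.ne
      (hmono _ _ (Or.inr (antilexLT_update_const hab hsq))),
    fun hj _ _ => antilexLE_comp_of_forall_exists hj⟩

end Antilex

theorem Fin.forall_exists_gt_apply_eq_iff {m n : ℕ} (j : Fin (m + 1) → Fin (n + 1)) :
    (∀ s q, j s < q → ∃ t, s < t ∧ j t = q) ↔
      (j (Fin.last m) = Fin.last n ∧ ∀ s, s < Fin.last m → j s < Fin.last n →
        ∀ q, j s < q → ∃ t, s < t ∧ j t = q) := by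
  refine ⟨fun hj => ⟨?_, fun s _ _ => hj s⟩, fun ⟨hlast, hj⟩ s q hsq => ?_⟩
  · by_contra hne
    obtain ⟨t, ht, -⟩ := hj _ _ ((Fin.le_last _).lt_of_ne hne)
    exact (Fin.le_last t).not_gt ht
  · have hs : j s < Fin.last n := hsq.trans_le (Fin.le_last q)
    refine hj s ((Fin.le_last s).lt_of_ne ?_) hs q hsq
    rintro rfl
    exact hs.ne hlast

theorem stmt13_general {A : Type*} [LinearOrder A] (hA : Nontrivial A)
    {n m : Nat} (π : Equiv.Perm (Fin (n + 1))) (σ : Equiv.Perm (Fin (m + 1)))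
    (idx : Fin (m + 1) → Fin (n + 1)) :
    (∀ x y : Fin (n + 1) → A, antilexLE (x ∘ π) (y ∘ π) →
        antilexLE ((fun s => x (idx s)) ∘ σ) ((fun s => y (idx s)) ∘ σ)) ↔
    ((π.symm (idx (σ (Fin.last m))) = Fin.last n) ∧
      ∀ s : Fin (m + 1), s < Fin.last m →
        π.symm (idx (σ s)) < Fin.last n →
          ∀ l : Fin (n + 1), π.symm (idx (σ s)) < l →
            ∃ t : Fin (m + 1), s < t ∧ π.symm (idx (σ t)) = l) := by
  obtain ⟨a, b, hab⟩ := exists_pair_lt A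
  refine Iff.trans ?_ ((antilexLE_comp_monotone_iff hab fun s => π.symm (idx (σ s))).trans
    (Fin.forall_exists_gt_apply_eq_iff _))
  constructor
  · intro hmono x y hxy
    simpa [comp_def] using hmono (x ∘ π.symm) (y ∘ π.symm) (by simpa [comp_def] using hxy)
  · intro hmono x y hxy
    simpa [comp_def] using hmono (x ∘ π) (y ∘ π) hxy

/-- Characterization of monotone coordinate projections between permuted
antilexicographic orders on powers of a linearly ordered set. -/
theorem stmt13 {A : Type*} [Fintype A] [LinearOrder A] (hA : Nontrivial A)
    {n m : Nat} (π : Equiv.Perm (Fin (n + 1))) (σ : Equiv.Perm (Fin (m + 1)))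
    (idx : Fin (m + 1) → Fin (n + 1)) :
    (∀ x y : Fin (n + 1) → A, antilexLE (x ∘ π) (y ∘ π) →
        antilexLE ((fun s => x (idx s)) ∘ σ) ((fun s => y (idx s)) ∘ σ)) ↔
    ((π.symm (idx (σ (Fin.last m))) = Fin.last n) ∧
      ∀ s : Fin (m + 1), s < Fin.last m →
        π.symm (idx (σ s)) < Fin.last n →
          ∀ l : Fin (n + 1), π.symm (idx (σ s)) < l →
            ∃ t : Fin (m + 1), s < t ∧ π.symm (idx (σ t)) = l) :=
  stmt13_general hA π σ idx
end

section
/- Let A be a finite set with at least two elements and < a linear order on A, with ⊑_π the permuted antilexicographic orders on powers of A. For every injective coordinate-projection map f : A^n → A^m, f(x₁,…,x_n) = (x_{i₁},…,x_{i_m}) with {i₁,…,i_m} = {1,…,n}, and every permutation σ of {1,…,m}, if f is monotone from (A^n, ≼) to (A^m, ⊑_σ) for some linear order ≼ on A^n, then ≼ equals ⊑_π for some permutation π of {1,…,n}. -/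
/-- Key lemma: if `g : Fin k → Fin n` has a section `M` picking, for each `j`,
the *largest* preimage of `j`, and `j⋆` is a coordinate where `x` and `y` differ
maximizing `M`, then `x ∘ g ⊏ y ∘ g` iff `x j⋆ < y j⋆`. -/
theorem antilexLT_comp_iff {A : Type*} [LinearOrder A] {k n : Nat}
    (g : Fin k → Fin n) (M : Fin n → Fin k)
    (hM : ∀ j, g (M j) = j) (hMmax : ∀ t, t ≤ M (g t))
    (x y : Fin n → A) (j' : Fin n) (hdiff : x j' ≠ y j')
    (hmax : ∀ j, x j ≠ y j → M j ≤ M j') :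
    antilexLT (x ∘ g) (y ∘ g) ↔ x j' < y j' := by
  constructor
  · rintro ⟨s, hs, hst⟩
    have hgs : x (g s) ≠ y (g s) := ne_of_lt hs
    have h1 : M j' ≤ s := by
      by_contra h
      push_neg at h
      exact hdiff (by simpa [hM] using hst (M j') h)
    have h2 : s ≤ M j' := le_trans (hMmax s) (hmax _ hgs)
    have hseq : s = M j' := le_antisymm h2 h1
    have : g s = j' := by rw [hseq, hM]
    rwa [← this]
  · intro h
    refine ⟨M j', by simpa [Function.comp, hM] using h, fun t ht => ?_⟩
    by_contra hne
    have : M (g t) ≤ M j' := hmax _ (by simpa using hne)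
    exact absurd (lt_of_lt_of_le ht (le_trans (hMmax t) this)) (lt_irrefl _)

theorem stmt14_aux {A : Type*} [LinearOrder A] {k n : Nat}
    (g : Fin k → Fin (n + 1)) (hg : Function.Surjective g) :
    ∃ π : Equiv.Perm (Fin (n + 1)),
      ∀ x y : Fin (n + 1) → A, antilexLE (x ∘ g) (y ∘ g) ↔ antilexLE (x ∘ π) (y ∘ π) := by
  classical
  -- the largest preimage of each coordinate
  have hne : ∀ j : Fin (n + 1), (Finset.univ.filter fun t => g t = j).Nonempty := by
    intro j
    obtain ⟨t, ht⟩ := hg j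
    exact ⟨t, by simp [ht]⟩
  set M : Fin (n + 1) → Fin k := fun j => (Finset.univ.filter fun t => g t = j).max' (hne j)
    with hMdef
  have hM : ∀ j, g (M j) = j := by
    intro j
    have := Finset.max'_mem _ (hne j)
    simpa using (Finset.mem_filter.mp this).2
  have hMmax : ∀ t, t ≤ M (g t) := by
    intro t
    exact Finset.le_max' _ t (by simp)
  have hMinj : Function.Injective M := fun a b hab => by rw [← hM a, ← hM b, hab]
  -- sort coordinates by their largest preimage
  set π : Equiv.Perm (Fin (n + 1)) := Tuple.sort M with hπ
  have hmono : StrictMono (M ∘ π) :=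
    (Tuple.monotone_sort M).strictMono_of_injective (hMinj.comp π.injective)
  refine ⟨π, fun x y => ?_⟩
  have hMπ : ∀ j j' : Fin (n + 1), M j ≤ M j' ↔ π.symm j ≤ π.symm j' := by
    intro j j'
    rw [← hmono.le_iff_le]
    simp
  by_cases hxy : x = y
  · subst hxy; simp [antilexLE]
  · have hxg : x ∘ g ≠ y ∘ g := by
      intro hc
      apply hxy
      funext j
      obtain ⟨t, ht⟩ := hg j
      rw [← ht]
      exact congrFun hc t
    have hxπ : x ∘ π ≠ y ∘ π := fun hc => hxy (funext fun j => by
      simpa using congrFun hc (π.symm j))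
    -- the coordinate where x and y differ with the largest M value
    obtain ⟨j', hj'mem, hj'max⟩ := Finset.exists_max_image
      (Finset.univ.filter fun j => x j ≠ y j) M ⟨(Function.ne_iff.mp hxy).choose,
        by simp [(Function.ne_iff.mp hxy).choose_spec]⟩
    have hdiff : x j' ≠ y j' := by simpa using hj'mem
    have hmax1 : ∀ j, x j ≠ y j → M j ≤ M j' := fun j hj => hj'max j (by simpa using hj)
    have hmax2 : ∀ j, x j ≠ y j → π.symm j ≤ π.symm j' := fun j hj =>
      (hMπ j j').mp (hmax1 j hj)
    have h1 := antilexLT_comp_iff g M hM hMmax x y j' hdiff hmax1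
    have h2 := antilexLT_comp_iff (π : Fin (n+1) → Fin (n+1)) π.symm
      (fun j => π.apply_symm_apply j) (fun t => by simp) x y j' hdiff hmax2
    simp only [antilexLE, hxg, hxπ, false_or]
    rw [h1, h2]

/-- A linear order on `A^n` making an injective coordinate projection an
embedding of linear orders into a permuted antilexicographic order must itself
be a permuted antilexicographic order. -/
theorem stmt14 {A : Type*} [Fintype A] [LinearOrder A] (hA : Nontrivial A)
    {n m : Nat} (idx : Fin (m + 1) → Fin (n + 1)) (hidx : Function.Surjective idx)
    (σ : Equiv.Perm (Fin (m + 1)))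
    (le : (Fin (n + 1) → A) → (Fin (n + 1) → A) → Prop)
    (hlin : IsLinearOrder (Fin (n + 1) → A) le)
    (hmono : ∀ x y : Fin (n + 1) → A,
      le x y ↔ antilexLE ((fun s => x (idx s)) ∘ σ) ((fun s => y (idx s)) ∘ σ)) :
    ∃ π : Equiv.Perm (Fin (n + 1)),
      ∀ x y : Fin (n + 1) → A, le x y ↔ antilexLE (x ∘ π) (y ∘ π) := by
  have hg : Function.Surjective (idx ∘ σ) := hidx.comp σ.surjective
  obtain ⟨π, hπ⟩ := stmt14_aux (A := A) (idx ∘ σ) hg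
  refine ⟨π, fun x y => ?_⟩
  rw [hmono x y, ← hπ x y]
  rfl
end

section
/- Let C₁ and C₂ be categories in which all hom-sets are finite. If C₁ and C₂ both have the Ramsey property for morphisms, then the product category C₁ × C₂ has the Ramsey property for morphisms. -/
open CategoryTheory

theorem stmt16 {C₁ C₂ : Type*} [Category C₁] [Category C₂]
    (hfin₁ : ∀ A B : C₁, Finite (A ⟶ B))
    (hfin₂ : ∀ A B : C₂, Finite (A ⟶ B))
    (h₁ : RamseyMor C₁) (h₂ : RamseyMor C₂) :
    RamseyMor (C₁ × C₂) := by
  classical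
  intro k hk A B hAB
  obtain ⟨fAB⟩ := hAB
  obtain ⟨D₁, ⟨_, ⟨v₁⟩, hR₁⟩⟩ := h₁ k hk A.1 B.1 ⟨fAB.1⟩
  haveI : Fintype (A.1 ⟶ D₁) := Fintype.ofFinite _
  set t := Fintype.card (A.1 ⟶ D₁) with ht
  have htpos : 0 < t := Fintype.card_pos_iff.mpr ⟨fAB.1 ≫ v₁⟩
  have hk2 : 2 ≤ k ^ t := le_trans hk (Nat.le_self_pow htpos.ne' k)
  obtain ⟨D₂, ⟨_, ⟨v₂⟩, hR₂⟩⟩ := h₂ (k ^ t) hk2 A.2 B.2 ⟨fAB.2⟩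
  refine ⟨(D₁, D₂), ⟨fAB⟩, ⟨(v₁, v₂)⟩, ?_⟩
  intro χ
  have e : ((A.1 ⟶ D₁) → Fin k) ≃ Fin (k ^ t) :=
    Fintype.equivFinOfCardEq (by simp [ht, Fintype.card_fun])
  obtain ⟨i₂, w₂, hw₂⟩ := hR₂ (fun g₂ => e (fun g₁ => χ (g₁, g₂)))
  obtain ⟨i₁, w₁, hw₁⟩ := hR₁ (e.symm i₂)
  refine ⟨i₁, (w₁, w₂), ?_⟩
  intro f
  have h2 : e (fun g₁ => χ (g₁, f.2 ≫ w₂)) = i₂ := hw₂ f.2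
  have h2' : (fun g₁ => χ (g₁, f.2 ≫ w₂)) = e.symm i₂ := by
    rw [← h2, Equiv.symm_apply_apply]
  have := hw₁ f.1
  rw [← this]
  have : χ (f.1 ≫ w₁, f.2 ≫ w₂) = (e.symm i₂) (f.1 ≫ w₁) := by
    rw [← h2']
  exact this
end

section
/- Let C be a category with finite hom-sets that has the Ramsey property for morphisms. Then for every positive integer n, the power category C^n has the Ramsey property for morphisms. -/
open CategoryTheory

section Glue

variable {C : Type*} [Category C] {n : ℕ}

/-- Glue a family of morphisms on the first `n` coordinates with one on the last. -/
def glueHom (A : Fin (n + 1) → C) (R : Fin n → C) (L : C)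
    (fr : ∀ i : Fin n, A i.castSucc ⟶ R i) (g : A (Fin.last n) ⟶ L) :
    ∀ i : Fin (n + 1), A i ⟶ Fin.snoc (α := fun _ => C) R L i :=
  fun i => Fin.lastCases (motive := fun i => A i ⟶ Fin.snoc (α := fun _ => C) R L i)
    (g ≫ eqToHom (by simp)) (fun j => fr j ≫ eqToHom (by simp)) i

lemma glueHom_castSucc (A : Fin (n + 1) → C) (R : Fin n → C) (L : C)
    (fr : ∀ i : Fin n, A i.castSucc ⟶ R i) (g : A (Fin.last n) ⟶ L) (j : Fin n) :
    glueHom A R L fr g j.castSucc = fr j ≫ eqToHom (by simp) := by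
  simp [glueHom]

lemma glueHom_last (A : Fin (n + 1) → C) (R : Fin n → C) (L : C)
    (fr : ∀ i : Fin n, A i.castSucc ⟶ R i) (g : A (Fin.last n) ⟶ L) :
    glueHom A R L fr g (Fin.last n) = g ≫ eqToHom (by simp) := by
  simp [glueHom]

/-- Every morphism into a snoc object decomposes as a glue. -/
lemma glueHom_decomp (A : Fin (n + 1) → C) (R : Fin n → C) (L : C)
    (h : ∀ i : Fin (n + 1), A i ⟶ Fin.snoc (α := fun _ => C) R L i) :
    h = glueHom A R L (fun j => h j.castSucc ≫ eqToHom (by simp))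
          (h (Fin.last n) ≫ eqToHom (by simp)) := by
  funext i
  induction i using Fin.lastCases with
  | last => simp [glueHom_last]
  | cast j => simp [glueHom_castSucc]

lemma comp_glueHom (A B : Fin (n + 1) → C) (R : Fin n → C) (L : C)
    (f : A ⟶ B) (fr : ∀ i : Fin n, B i.castSucc ⟶ R i) (g : B (Fin.last n) ⟶ L) :
    (f ≫ (glueHom B R L fr g : B ⟶ Fin.snoc (α := fun _ => C) R L)) =
      glueHom A R L (fun j => f j.castSucc ≫ fr j) (f (Fin.last n) ≫ g) := by
  funext i
  induction i using Fin.lastCases with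
  | last =>
      have : (f ≫ (glueHom B R L fr g : B ⟶ Fin.snoc (α := fun _ => C) R L)) (Fin.last n) =
          f (Fin.last n) ≫ glueHom B R L fr g (Fin.last n) := rfl
      rw [this, glueHom_last, glueHom_last, Category.assoc]
  | cast j =>
      have : (f ≫ (glueHom B R L fr g : B ⟶ Fin.snoc (α := fun _ => C) R L)) j.castSucc =
          f j.castSucc ≫ glueHom B R L fr g j.castSucc := rfl
      rw [this, glueHom_castSucc, glueHom_castSucc, Category.assoc]

end Glue

lemma ramseyMor_pi {C : Type*} [Category C]
    (hfin : ∀ A B : C, Finite (A ⟶ B))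
    (hR : RamseyMor C) :
    ∀ n : Nat, RamseyMor (Fin n → C) := by
  intro n
  induction n with
  | zero =>
      intro k hk A B _
      refine ⟨B, ⟨fun i => i.elim0⟩, ⟨fun i => i.elim0⟩, fun χ => ?_⟩
      refine ⟨χ (fun i => i.elim0), fun i => i.elim0, fun f => ?_⟩
      congr 1
      funext i
      exact i.elim0
  | succ n ih =>
      intro k hk A B hAB
      obtain ⟨f₀⟩ := hAB
      -- last coordinate: apply Ramsey in C
      obtain ⟨CL, hABL, hBCL, hcolL⟩ :=
        hR k hk (A (Fin.last n)) (B (Fin.last n)) ⟨f₀ (Fin.last n)⟩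
      -- the color set for the induction: functions (A last ⟶ CL) → Fin k
      have hACL : Nonempty (A (Fin.last n) ⟶ CL) := ⟨hABL.some ≫ hBCL.some⟩
      have : Finite ((A (Fin.last n) ⟶ CL) → Fin k) := by
        have := hfin (A (Fin.last n)) CL
        infer_instance
      obtain ⟨k', ⟨e⟩⟩ := Finite.exists_equiv_fin ((A (Fin.last n) ⟶ CL) → Fin k)
      have hk' : 2 ≤ k' := by
        have h01 : (⟨0, by omega⟩ : Fin k) ≠ ⟨1, by omega⟩ := by
          intro h; exact absurd (congrArg Fin.val h) (by simp)
        have hxy : (fun _ : (A (Fin.last n) ⟶ CL) => (⟨0, by omega⟩ : Fin k)) ≠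
            (fun _ => ⟨1, by omega⟩) := by
          intro h
          exact h01 (congrFun h hACL.some)
        have hexy := fun h => hxy (e.injective h)
        have h1 := (e (fun _ => ⟨0, by omega⟩)).2
        have h2 := (e (fun _ => ⟨1, by omega⟩)).2
        by_contra h
        push_neg at h
        exact hexy (Fin.ext (by omega))
      -- first n coordinates: apply induction hypothesis with k' colors
      have hABr : Nonempty ((Fin.init A : Fin n → C) ⟶ Fin.init B) :=
        ⟨fun i => f₀ i.castSucc⟩
      obtain ⟨CR, hABr', hBCr, hcolR⟩ := ih k' hk' (Fin.init A) (Fin.init B) hABr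
      refine ⟨Fin.snoc (α := fun _ => C) CR CL, ⟨f₀⟩,
        ⟨glueHom B CR CL hBCr.some hBCL.some⟩, fun χ => ?_⟩
      -- coloring of the first n coordinates
      set χR : ((Fin.init A : Fin n → C) ⟶ CR) → Fin k' :=
        fun fr => e (fun g => χ (glueHom A CR CL fr g)) with hχR
      obtain ⟨i', wR, hwR⟩ := hcolR χR
      set φ : (A (Fin.last n) ⟶ CL) → Fin k := e.symm i' with hφ
      obtain ⟨i, wL, hwL⟩ := hcolL φ
      refine ⟨i, glueHom B CR CL wR wL, fun f => ?_⟩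
      have hdec : f ≫ (glueHom B CR CL wR wL : B ⟶ Fin.snoc (α := fun _ => C) CR CL) =
          glueHom A CR CL (fun j => f j.castSucc ≫ wR j) (f (Fin.last n) ≫ wL) :=
        comp_glueHom A B CR CL f wR wL
      rw [hdec]
      -- the rest-part composite is itself a composite in the pi category Fin n → C
      have hcompR : (fun j => f j.castSucc ≫ wR j) =
          ((fun j => f j.castSucc : (Fin.init A : Fin n → C) ⟶ Fin.init B) ≫ wR) := rfl
      have key : (fun g => χ (glueHom A CR CL (fun j => f j.castSucc ≫ wR j) g)) = φ := by
        have := hwR (fun j => f j.castSucc)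
        rw [hχR] at this
        simp only at this
        rw [hφ, ← this, hcompR]
        exact (e.symm_apply_apply _).symm
      have := congrFun key (f (Fin.last n) ≫ wL)
      rw [this]
      exact hwL (f (Fin.last n))

theorem stmt17 {C : Type*} [Category C]
    (hfin : ∀ A B : C, Finite (A ⟶ B))
    (hR : RamseyMor C) :
    ∀ n : Nat, 0 < n → RamseyMor (Fin n → C) := by
  intro n _
  exact ramseyMor_pi hfin hR n
end
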